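/- arXiv:1403.7322 — 3 statements merged into one kernel-verified Lean document; each statement's English description precedes it below -/
import Mathlib

section
/- Let K_R ≥ 0, γ > 0 and α ∈ (0,1). For each N ≥ 1 let R_N be the N×N complex matrix with entries (R_N)_{m,n} = (1/(K_R+1))·α^{|m−n|} (a Hermitian Toeplitz matrix, which is positive definite, so R_N + γ⁻¹I is invertible). Then the normalized trace (1/N)·trace(R_N − R_N(R_N + γ⁻¹I)⁻¹R_N), which is a real number, converges as N → ∞ to 1/√(γ² + 2γ·((1+α²)/(1−α²))·(K_R+1) + (K_R+1)²). -/
open Matrix Filter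

/-- The pilot-location delay-correlation matrix of the paper: the `N×N` complex Toeplitz
matrix with `(m,n)` entry `(1/(K_R+1))·α^{|m-n|}`. -/
noncomputable def pilotCorrMatrix (K_R α : ℝ) (N : ℕ) : Matrix (Fin N) (Fin N) ℂ :=
  Matrix.of fun m n : Fin N =>
    (((1 / (K_R + 1)) * α ^ ((m : ℤ) - (n : ℤ)).natAbs : ℝ) : ℂ)

/-!
The correlation matrix `R_N` is a multiple of the Kac–Murdock–Szegő matrix, whose inverse is
tridiagonal. By the matrix inversion lemma the error matrix `R - R (R + γ⁻¹ I)⁻¹ R` is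
`(R⁻¹ + γ I)⁻¹`, the inverse of the symmetric tridiagonal matrix `S_N` with diagonal
`(a', a, …, a, a')` and off-diagonal `b`. Its adjugate is explicit in terms of the continuants
`ψ n` (the leading principal minors), so `trace S_N⁻¹ = (∑ ψ i ψ (N - 1 - i)) / det S_N`.
Writing `ψ n = A rⁿ + B sⁿ` with `r > |s|` the roots of `x² - a x + b²`, the numerator is
`~ N A² r^(N-1)` and `det S_N ~ A (a' - s) r^(N-1)`, so `N⁻¹ trace S_N⁻¹ → 1 / (r - s)`, and
`(r - s)² = a² - 4 b²` is the expression under the square root.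
-/

open Finset Topology

section Tridiagonal

variable {R : Type*} [CommRing R]

def continuant (a a' c : R) : ℕ → R
  | 0 => 1
  | 1 => a'
  | n + 2 => a * continuant a a' c (n + 1) - c * continuant a a' c n

section Continuant

variable (a a' c : R)

@[simp] lemma continuant_zero : continuant a a' c 0 = 1 := rfl

@[simp] lemma continuant_one : continuant a a' c 1 = a' := rfl

lemma continuant_add_two (n : ℕ) :
    continuant a a' c (n + 2) = a * continuant a a' c (n + 1) - c * continuant a a' c n := rfl

lemma continuant_one_add_eq_one : ∀ n, continuant (1 + c) 1 c n = 1
  | 0 => rfl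
  | 1 => rfl
  | n + 2 => by
    rw [continuant_add_two, continuant_one_add_eq_one (n + 1), continuant_one_add_eq_one n]
    ring

lemma continuant_add_one_mul_add_one (k m : ℕ) :
    continuant a a' c (k + 1) * continuant a a' c (m + 1)
        - c * continuant a a' c k * continuant a a' c m
      = a' * continuant a a' c (k + m + 1) - c * continuant a a' c (k + m) := by
  induction k generalizing m with
  | zero => simp
  | succ k ih =>
    rw [show k + 1 + m = k + (m + 1) by omega, ← ih (m + 1), continuant_add_two,
      continuant_add_two]
    ring

end Continuant

def tridiag (a a' b : R) (N : ℕ) : Matrix (Fin N) (Fin N) R :=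
  of fun i k : Fin N =>
    if (i : ℕ) = k then (if (i : ℕ) = 0 ∨ (i : ℕ) + 1 = N then a' else a)
    else if (i : ℕ) + 1 = k ∨ (k : ℕ) + 1 = i then b else 0

def tridiagMulEntry (a a' b : R) (N : ℕ) (f : ℕ → ℕ → R) (i j : ℕ) : R :=
  (if i = 0 ∨ i + 1 = N then a' else a) * f i j + (if 0 < i then b * f (i - 1) j else 0)
    + (if i + 1 < N then b * f (i + 1) j else 0)

lemma tridiag_mul_of_apply (a a' b : R) {N : ℕ} (f : ℕ → ℕ → R) (i j : Fin N) :
    (tridiag a a' b N * of fun k l : Fin N => f k l) i j = tridiagMulEntry a a' b N f i j := by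
  set d := if (i : ℕ) = 0 ∨ (i : ℕ) + 1 = N then a' else a
  have hsplit : ∀ k ∈ range N,
      (if (i : ℕ) = k then d else if (i : ℕ) + 1 = k ∨ k + 1 = i then b else 0) * f k j =
        (if k = i then d * f i j else 0)
        + (if k = i - 1 then (if 0 < (i : ℕ) then b * f (i - 1) j else 0) else 0)
        + (if k = i + 1 then b * f (i + 1) j else 0) := by
    intro k _
    split_ifs <;> first | omega | (subst_vars; ring1)
  simp only [mul_apply, tridiag, of_apply]
  rw [Fin.sum_univ_eq_sum_range (fun k => (if (i : ℕ) = k then d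
      else if (i : ℕ) + 1 = k ∨ k + 1 = i then b else 0) * f k j), sum_congr rfl hsplit]
  simp only [sum_add_distrib, sum_ite_eq', mem_range, i.isLt, if_true, tridiagMulEntry]
  rw [if_pos (show (i : ℕ) - 1 < N by omega)]

/-- `det (tridiag a a' b N)` for `c = b ^ 2`, expanded along the last row. -/
def tridiagDet (a a' c : R) (N : ℕ) : R :=
  a' * continuant a a' c (N - 1) - c * continuant a a' c (N - 2)

/-- The entries of the adjugate of `tridiag a a' b N`: the continuants of the leading and
trailing principal minors, times a power of `-b`. -/
def tridiagAdjEntry (a a' b : R) (N i j : ℕ) : R :=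
  (-b) ^ (max i j - min i j) * continuant a a' (b ^ 2) (min i j)
    * continuant a a' (b ^ 2) (N - 1 - max i j)

def tridiagAdj (a a' b : R) (N : ℕ) : Matrix (Fin N) (Fin N) R :=
  of fun i j : Fin N => tridiagAdjEntry a a' b N i j

lemma tridiagAdjEntry_eq {a a' b : R} {N i j : ℕ} (u v w : ℕ) (hu : min i j = u)
    (hv : max i j - min i j = v) (hw : N - 1 - max i j = w) :
    tridiagAdjEntry a a' b N i j
      = (-b) ^ v * continuant a a' (b ^ 2) u * continuant a a' (b ^ 2) w := by
  subst hu hv hw; rfl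

section TridiagAdj

variable (a a' b : R) {N : ℕ}

lemma tridiagMulEntry_tridiagAdjEntry_of_lt {i j : ℕ} (hij : i < j) (hj : j < N) :
    tridiagMulEntry a a' b N (tridiagAdjEntry a a' b N) i j = 0 := by
  obtain ⟨m, rfl⟩ : ∃ m, j = i + (m + 1) := ⟨j - i - 1, by omega⟩
  obtain ⟨w, hw⟩ : ∃ w, N = i + (m + 1) + 1 + w := ⟨N - 1 - (i + (m + 1)), by omega⟩
  rw [tridiagMulEntry, if_pos (show i + 1 < N by omega),
    tridiagAdjEntry_eq (i := i) i (m + 1) w (by omega) (by omega) (by omega),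
    tridiagAdjEntry_eq (i := i + 1) (i + 1) m w (by omega) (by omega) (by omega)]
  rcases i with _ | k
  · rw [if_pos (Or.inl rfl), if_neg (lt_irrefl 0), continuant_zero, zero_add, continuant_one]
    ring
  · rw [if_neg (show ¬(k + 1 = 0 ∨ k + 1 + 1 = N) by omega), if_pos k.succ_pos,
      Nat.add_sub_cancel, tridiagAdjEntry_eq (i := k) k (m + 2) w (by omega) (by omega) (by omega),
      continuant_add_two]
    ring

lemma tridiagMulEntry_tridiagAdjEntry_of_gt {i j : ℕ} (hji : j < i) (hi : i < N) :
    tridiagMulEntry a a' b N (tridiagAdjEntry a a' b N) i j = 0 := by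
  obtain ⟨m, rfl⟩ : ∃ m, i = j + (m + 1) := ⟨i - j - 1, by omega⟩
  obtain ⟨w, hw⟩ : ∃ w, N = j + (m + 1) + 1 + w := ⟨N - 1 - (j + (m + 1)), by omega⟩
  rw [tridiagMulEntry, if_pos (show 0 < j + (m + 1) by omega),
    show j + (m + 1) - 1 = j + m by omega,
    tridiagAdjEntry_eq (i := j + (m + 1)) j (m + 1) w (by omega) (by omega) (by omega),
    tridiagAdjEntry_eq (i := j + m) j m (w + 1) (by omega) (by omega) (by omega)]
  rcases w with _ | l
  · rw [if_pos (Or.inr hw.symm), if_neg (show ¬(j + (m + 1) + 1 < N) by omega), continuant_zero,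
      zero_add, continuant_one]
    ring
  · rw [if_neg (show ¬(j + (m + 1) = 0 ∨ j + (m + 1) + 1 = N) by omega),
      if_pos (show j + (m + 1) + 1 < N by omega),
      tridiagAdjEntry_eq (i := j + (m + 1) + 1) j (m + 2) l (by omega) (by omega) (by omega),
      continuant_add_two]
    ring

lemma tridiagMulEntry_tridiagAdjEntry_self (hN : 2 ≤ N) {i : ℕ} (hi : i < N) :
    tridiagMulEntry a a' b N (tridiagAdjEntry a a' b N) i i = tridiagDet a a' (b ^ 2) N := by
  obtain ⟨w, hw⟩ : ∃ w, N = i + 1 + w := ⟨N - 1 - i, by omega⟩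
  rw [tridiagMulEntry, tridiagDet,
    tridiagAdjEntry_eq (i := i) i 0 w (by omega) (by omega) (by omega)]
  rcases i with _ | k
  · rw [if_pos (Or.inl rfl), if_neg (lt_irrefl 0), if_pos (show 0 + 1 < N by omega),
      tridiagAdjEntry_eq (i := 0 + 1) 0 1 (w - 1) (by omega) (by omega) (by omega),
      show N - 1 = w by omega, show N - 2 = w - 1 by omega]
    simp only [continuant_zero]
    ring
  rcases w with _ | l
  · rw [if_pos (Or.inr hw.symm), if_pos k.succ_pos, if_neg (show ¬(k + 1 + 1 < N) by omega),
      Nat.add_sub_cancel, tridiagAdjEntry_eq (i := k) k 1 0 (by omega) (by omega) (by omega),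
      show N - 1 = k + 1 by omega, show N - 2 = k by omega]
    simp only [continuant_zero]
    ring
  · have hwron := continuant_add_one_mul_add_one a a' (b ^ 2) (k + 1) l
    rw [continuant_add_two, show k + 1 + l + 1 = N - 1 by omega,
      show k + 1 + l = N - 2 by omega] at hwron
    rw [if_neg (show ¬(k + 1 = 0 ∨ k + 1 + 1 = N) by omega), if_pos k.succ_pos,
      if_pos (show k + 1 + 1 < N by omega), Nat.add_sub_cancel,
      tridiagAdjEntry_eq (i := k) k 1 (l + 1) (by omega) (by omega) (by omega),
      tridiagAdjEntry_eq (i := k + 1 + 1) (k + 1) 1 l (by omega) (by omega) (by omega)]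
    linear_combination hwron

lemma tridiag_mul_tridiagAdj (hN : 2 ≤ N) :
    tridiag a a' b N * tridiagAdj a a' b N = tridiagDet a a' (b ^ 2) N • 1 := by
  ext ⟨i, hi⟩ ⟨j, hj⟩
  rw [tridiagAdj, tridiag_mul_of_apply, Matrix.smul_apply, one_apply, smul_eq_mul]
  simp only [Fin.mk.injEq]
  rcases lt_trichotomy i j with hij | rfl | hij
  · rw [if_neg hij.ne, tridiagMulEntry_tridiagAdjEntry_of_lt a a' b hij hj, mul_zero]
  · rw [if_pos rfl, tridiagMulEntry_tridiagAdjEntry_self a a' b hN hi, mul_one]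
  · rw [if_neg hij.ne', tridiagMulEntry_tridiagAdjEntry_of_gt a a' b hij hi, mul_zero]

lemma trace_tridiagAdj :
    trace (tridiagAdj a a' b N)
      = ∑ i ∈ range N, continuant a a' (b ^ 2) i * continuant a a' (b ^ 2) (N - 1 - i) := by
  simp only [trace, Matrix.diag, tridiagAdj, of_apply, tridiagAdjEntry, max_self, min_self,
    Nat.sub_self, pow_zero, one_mul]
  exact Fin.sum_univ_eq_sum_range (fun i => continuant a a' (b ^ 2) i
    * continuant a a' (b ^ 2) (N - 1 - i)) N

lemma smul_tridiag_add_smul_one (μ γ : R) :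
    μ • tridiag a a' b N + γ • (1 : Matrix (Fin N) (Fin N) R)
      = tridiag (μ * a + γ) (μ * a' + γ) (μ * b) N := by
  ext i j
  simp only [tridiag, Matrix.add_apply, Matrix.smul_apply, of_apply, one_apply, smul_eq_mul,
    Fin.ext_iff]
  split_ifs <;> ring1

end TridiagAdj

lemma tridiag_mul_inv_smul_tridiagAdj {K : Type*} [Field K] (a a' b : K) {N : ℕ} (hN : 2 ≤ N)
    (hθ : tridiagDet a a' (b ^ 2) N ≠ 0) :
    tridiag a a' b N * ((tridiagDet a a' (b ^ 2) N)⁻¹ • tridiagAdj a a' b N) = 1 := by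
  rw [Matrix.mul_smul, tridiag_mul_tridiagAdj _ _ _ hN, smul_smul, inv_mul_cancel₀ hθ, one_smul]

/-- The Kac–Murdock–Szegő matrix. -/
def kmsMatrix (x : R) (N : ℕ) : Matrix (Fin N) (Fin N) R :=
  of fun i j : Fin N => x ^ ((i : ℤ) - (j : ℤ)).natAbs

lemma tridiag_mul_kmsMatrix (x : R) {N : ℕ} (hN : 2 ≤ N) :
    tridiag (1 + x ^ 2) 1 (-x) N * kmsMatrix x N = (1 - x ^ 2) • 1 := by
  have hψ := continuant_one_add_eq_one (x ^ 2)
  have hadj : tridiagAdj (1 + x ^ 2) 1 (-x) N = kmsMatrix x N := by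
    ext i j
    simp only [tridiagAdj, kmsMatrix, of_apply, tridiagAdjEntry, neg_sq, neg_neg, hψ, mul_one]
    congr 1
    omega
  rw [← hadj, tridiag_mul_tridiagAdj _ _ _ hN, tridiagDet, neg_sq, hψ, hψ, mul_one, mul_one]

end Tridiagonal

section MMSE

variable {n K : Type*} [Fintype n] [DecidableEq n] [Field K]

/-- The MMSE error correlation matrix; `σ` is the noise variance `γ⁻¹`. -/
noncomputable def mmseError (R : Matrix n n K) (σ : K) : Matrix n n K :=
  R - R * (R + σ • 1)⁻¹ * R

lemma mmseError_eq_inv {R P : Matrix n n K} {σ : K} (hσ : σ ≠ 0) (hPR : P * R = 1)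
    (hP : IsUnit (P + σ⁻¹ • 1)) : mmseError R σ = (P + σ⁻¹ • 1)⁻¹ := by
  set W := (P + σ⁻¹ • 1)⁻¹
  have hRP : R * P = 1 := mul_eq_one_comm.mp hPR
  have hW : (P + σ⁻¹ • 1) * W = 1 := mul_nonsing_inv _ ((isUnit_iff_isUnit_det _).mp hP)
  -- `R + σ I = σ R (P + σ⁻¹ I)`, which inverts to `σ⁻¹ W P`
  have hinv : (R + σ • 1)⁻¹ = σ⁻¹ • (W * P) := by
    refine inv_eq_right_inv ?_
    have hfac : R + σ • 1 = σ • (R * (P + σ⁻¹ • 1)) := by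
      rw [mul_add, hRP, Matrix.mul_smul, mul_one, smul_add, smul_smul, mul_inv_cancel₀ hσ, one_smul,
        add_comm]
    rw [hfac, smul_mul_smul_comm, mul_inv_cancel₀ hσ, one_smul, mul_assoc, ← mul_assoc _ W,
      hW, one_mul, hRP]
  calc mmseError R σ = R - σ⁻¹ • (R * W) := by
        rw [mmseError, hinv, Matrix.mul_smul, Matrix.smul_mul, mul_assoc, mul_assoc, hPR, mul_one]
    _ = R * ((P + σ⁻¹ • 1) * W) - σ⁻¹ • (R * W) := by rw [hW, mul_one]
    _ = W := by
        rw [add_mul, mul_add, ← mul_assoc, hRP, one_mul, Matrix.smul_mul, one_mul, Matrix.mul_smul,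
          add_sub_cancel_right]

lemma RingHom.map_matrix_inv {L : Type*} [Field L] (f : K →+* L) (A : Matrix n n K) :
    A⁻¹.map f = (A.map f)⁻¹ := by
  have hdet : (A.map f).det = f A.det := (f.map_det A).symm
  have hadj : (A.map f).adjugate = A.adjugate.map f := (f.map_adjugate A).symm
  rw [Matrix.inv_def, Matrix.inv_def, hdet, hadj]
  ext i j
  simp [Ring.inverse_eq_inv']

lemma map_mmseError {L : Type*} [Field L] (f : K →+* L) (R : Matrix n n K) (σ : K) :
    (mmseError R σ).map f = mmseError (R.map f) (f σ) := by
  simp [mmseError, Matrix.map_sub, Matrix.map_mul, RingHom.map_matrix_inv, Matrix.map_add,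
    Matrix.map_smul', Matrix.map_one]

end MMSE

lemma continuant_eq_of_roots {K : Type*} [Field K] {r s a' : K} (hrs : r ≠ s) :
    ∀ n, continuant (r + s) a' (r * s) n = ((a' - s) * r ^ n + (r - a') * s ^ n) / (r - s)
  | 0 => by rw [continuant_zero]; field_simp [sub_ne_zero.mpr hrs]; ring
  | 1 => by rw [continuant_one]; field_simp [sub_ne_zero.mpr hrs]; ring
  | n + 2 => by
    rw [continuant_add_two, continuant_eq_of_roots hrs (n + 1), continuant_eq_of_roots hrs n]
    field_simp [sub_ne_zero.mpr hrs]
    ring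

lemma tendsto_inv_mul_sum_mul_reflect {A B q : ℝ} (hq : |q| < 1) :
    Tendsto (fun N : ℕ => (N : ℝ)⁻¹ * ∑ i ∈ range N, (A + B * q ^ i) * (A + B * q ^ (N - 1 - i)))
      atTop (𝓝 (A ^ 2)) := by
  have hpow : Tendsto (fun n : ℕ => q ^ n) atTop (𝓝 0) :=
    tendsto_pow_atTop_nhds_zero_of_abs_lt_one hq
  have hlim : Tendsto (fun N : ℕ => A ^ 2 + 2 * A * B * ((N : ℝ)⁻¹ * ∑ i ∈ range N, q ^ i)
      + B ^ 2 * q ^ (N - 1)) atTop (𝓝 (A ^ 2 + 2 * A * B * 0 + B ^ 2 * 0)) :=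
    ((hpow.cesaro.const_mul _).const_add _).add ((hpow.comp (tendsto_sub_atTop_nat 1)).const_mul _)
  rw [mul_zero, mul_zero, add_zero, add_zero] at hlim
  refine hlim.congr' ?_
  filter_upwards [eventually_ge_atTop 1] with N hN
  have hterm : ∀ i ∈ range N, (A + B * q ^ i) * (A + B * q ^ (N - 1 - i))
      = A ^ 2 + A * B * q ^ i + A * B * q ^ (N - 1 - i) + B ^ 2 * q ^ (N - 1) := by
    intro i hi
    have hsplit : q ^ (N - 1) = q ^ i * q ^ (N - 1 - i) := by
      rw [← pow_add]; congr 1; have := mem_range.mp hi; omega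
    rw [hsplit]
    ring
  rw [sum_congr rfl hterm, sum_add_distrib, sum_add_distrib, sum_add_distrib, ← mul_sum, ← mul_sum,
    sum_range_reflect (fun i => q ^ i) N]
  simp only [sum_const, card_range, nsmul_eq_mul]
  have : (N : ℝ) ≠ 0 := by positivity
  field_simp
  ring

section Roots

variable {r s a' : ℝ} (hrs : |s| < r)
include hrs

lemma continuant_eq_pow_mul (n : ℕ) :
    continuant (r + s) a' (r * s) n
      = r ^ n * ((a' - s) / (r - s) + (r - a') / (r - s) * (s / r) ^ n) := by
  have hr : 0 < r := (abs_nonneg s).trans_lt hrs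
  rw [continuant_eq_of_roots (lt_of_le_of_lt (le_abs_self s) hrs).ne', div_pow]
  field_simp

lemma tendsto_tridiagDet_div_pow :
    Tendsto (fun N : ℕ => tridiagDet (r + s) a' (r * s) N / r ^ (N - 1)) atTop
      (𝓝 ((a' - s) ^ 2 / (r - s))) := by
  have hr : 0 < r := (abs_nonneg s).trans_lt hrs
  have hq : |s / r| < 1 := by rwa [abs_div, abs_of_pos hr, div_lt_one hr]
  set φ : ℕ → ℝ := fun n => (a' - s) / (r - s) + (r - a') / (r - s) * (s / r) ^ n
  have hφ : Tendsto φ atTop (𝓝 ((a' - s) / (r - s) + (r - a') / (r - s) * 0)) :=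
    ((tendsto_pow_atTop_nhds_zero_of_abs_lt_one hq).const_mul _).const_add _
  rw [mul_zero, add_zero] at hφ
  rw [← tendsto_add_atTop_iff_nat 2]
  convert ((hφ.comp (tendsto_add_atTop_nat 1)).const_mul a').sub (hφ.const_mul s) using 2 with M
  · simp only [tridiagDet, Function.comp_apply, show M + 2 - 1 = M + 1 by omega,
      show M + 2 - 2 = M by omega, continuant_eq_pow_mul hrs, φ]
    field_simp
    ring
  · field_simp

lemma tendsto_inv_mul_inv_tridiagDet_mul_sum (ha' : a' ≠ s) :
    Tendsto (fun N : ℕ => (N : ℝ)⁻¹ * ((tridiagDet (r + s) a' (r * s) N)⁻¹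
        * ∑ i ∈ range N,
          continuant (r + s) a' (r * s) i * continuant (r + s) a' (r * s) (N - 1 - i)))
      atTop (𝓝 (r - s)⁻¹) := by
  have hr : 0 < r := (abs_nonneg s).trans_lt hrs
  have hrs' : r - s ≠ 0 := sub_ne_zero.mpr (lt_of_le_of_lt (le_abs_self s) hrs).ne'
  have hq : |s / r| < 1 := by rwa [abs_div, abs_of_pos hr, div_lt_one hr]
  have hlim := (tendsto_inv_mul_sum_mul_reflect (A := (a' - s) / (r - s))
    (B := (r - a') / (r - s)) hq).div (tendsto_tridiagDet_div_pow hrs)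
    (div_ne_zero (pow_ne_zero 2 (sub_ne_zero.mpr ha')) hrs')
  convert hlim using 1
  · ext N
    have hsum : ∑ i ∈ range N, continuant (r + s) a' (r * s) i
          * continuant (r + s) a' (r * s) (N - 1 - i)
        = r ^ (N - 1) * ∑ i ∈ range N, ((a' - s) / (r - s) + (r - a') / (r - s) * (s / r) ^ i)
          * ((a' - s) / (r - s) + (r - a') / (r - s) * (s / r) ^ (N - 1 - i)) := by
      rw [mul_sum]
      refine sum_congr rfl fun i hi => ?_
      have hsplit : r ^ (N - 1) = r ^ i * r ^ (N - 1 - i) := by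
        rw [← pow_add]; congr 1; have := mem_range.mp hi; omega
      rw [continuant_eq_pow_mul hrs, continuant_eq_pow_mul hrs, hsplit]
      ring
    rw [Pi.div_apply, hsum, div_div_eq_mul_div]
    ring
  · field_simp

end Roots

lemma exists_roots_of_sq_lt {a c : ℝ} (ha : 0 < a) (hc : 4 * c < a ^ 2) :
    ∃ r s, a = r + s ∧ c = r * s ∧ |s| < r ∧ 2 * s < a ∧ r - s = √(a ^ 2 - 4 * c) := by
  have hd : 0 < √(a ^ 2 - 4 * c) := Real.sqrt_pos.mpr (by linarith)
  have hd2 : √(a ^ 2 - 4 * c) ^ 2 = a ^ 2 - 4 * c := Real.sq_sqrt (by linarith)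
  refine ⟨(a + √(a ^ 2 - 4 * c)) / 2, (a - √(a ^ 2 - 4 * c)) / 2, by ring,
    by linear_combination hd2 / 4, abs_lt.mpr ⟨by linarith, by linarith⟩, by linarith, by ring⟩

section Discriminant

variable {a a' b : ℝ} (ha : 0 < a) (hb : 4 * b ^ 2 < a ^ 2) (ha' : a < 2 * a')
include ha hb ha'

lemma eventually_tridiagDet_ne_zero : ∀ᶠ N in atTop, tridiagDet a a' (b ^ 2) N ≠ 0 := by
  obtain ⟨r, s, rfl, hc, hrs, hs, -⟩ := exists_roots_of_sq_lt ha hb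
  have hlim := tendsto_tridiagDet_div_pow (a' := a') hrs
  rw [hc]
  filter_upwards [hlim.eventually_ne (div_ne_zero (pow_ne_zero 2 (by linarith))
    (by linarith))] with N hN using (div_ne_zero_iff.mp hN).1

lemma tendsto_inv_mul_trace_tridiag_inv :
    Tendsto (fun N : ℕ => (N : ℝ)⁻¹ * trace (tridiag a a' b N)⁻¹) atTop
      (𝓝 (√(a ^ 2 - 4 * b ^ 2))⁻¹) := by
  have hθ := eventually_tridiagDet_ne_zero ha hb ha'
  obtain ⟨r, s, rfl, hc, hrs, hs, hd⟩ := exists_roots_of_sq_lt ha hb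
  rw [← hd]
  refine (tendsto_inv_mul_inv_tridiagDet_mul_sum hrs (by linarith : a' ≠ s)).congr' ?_
  filter_upwards [eventually_ge_atTop 2, hθ] with N hN hθN
  rw [inv_eq_right_inv (tridiag_mul_inv_smul_tridiagAdj _ _ _ hN hθN), trace_smul,
    trace_tridiagAdj, smul_eq_mul, hc]

end Discriminant

lemma pilotCorrMatrix_eq_map (K_R α : ℝ) (N : ℕ) :
    pilotCorrMatrix K_R α N = ((1 / (K_R + 1)) • kmsMatrix α N).map Complex.ofRealHom := by
  ext i j
  simp [pilotCorrMatrix, kmsMatrix]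

lemma mmseError_smul_kmsMatrix {K : Type*} [Field K] {κ μ x γ : K} {N : ℕ} (hN : 2 ≤ N)
    (hγ : γ ≠ 0) (hμ : μ * κ * (1 - x ^ 2) = 1)
    (hθ : tridiagDet (μ * (1 + x ^ 2) + γ) (μ * 1 + γ) ((μ * -x) ^ 2) N ≠ 0) :
    mmseError (κ • kmsMatrix x N) γ⁻¹
      = (tridiag (μ * (1 + x ^ 2) + γ) (μ * 1 + γ) (μ * -x) N)⁻¹ := by
  have hPR : (μ • tridiag (1 + x ^ 2) 1 (-x) N) * (κ • kmsMatrix x N) = 1 := by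
    rw [smul_mul_smul_comm, tridiag_mul_kmsMatrix x hN, smul_smul, hμ, one_smul]
  have hP := smul_tridiag_add_smul_one (1 + x ^ 2) 1 (-x) μ γ (N := N)
  have hunit : IsUnit (μ • tridiag (1 + x ^ 2) 1 (-x) N + γ⁻¹⁻¹ • 1) := by
    rw [inv_inv, hP]
    exact IsUnit.of_mul_eq_one _ (tridiag_mul_inv_smul_tridiagAdj _ _ _ hN hθ)
  rw [mmseError_eq_inv (inv_ne_zero hγ) hPR hunit, inv_inv, hP]

/-- Theorem 1 of the paper: for `K_R ≥ 0`, `γ > 0`, `α ∈ (0,1)`, the normalized trace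
`(1/N)·trace(R_N - R_N (R_N + γ⁻¹ I)⁻¹ R_N)` of the MMSE error correlation matrix built from
the Toeplitz correlation matrix `R_N` with entries `(1/(K_R+1))·α^{|m-n|}` converges, as
`N → ∞`, to `1/√(γ² + 2γ((1+α²)/(1-α²))(K_R+1) + (K_R+1)²)`. -/
theorem asymptotic_mse_pilot_locations (K_R γ α : ℝ) (hK : 0 ≤ K_R) (hγ : 0 < γ)
    (hα : α ∈ Set.Ioo (0 : ℝ) 1) :
    Tendsto (fun N : ℕ =>
        (1 / (N : ℂ)) * Matrix.trace
          (pilotCorrMatrix K_R α N -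
            pilotCorrMatrix K_R α N *
              (pilotCorrMatrix K_R α N + ((γ⁻¹ : ℝ) : ℂ) • (1 : Matrix (Fin N) (Fin N) ℂ))⁻¹ *
              pilotCorrMatrix K_R α N))
      atTop
      (nhds (((1 / Real.sqrt (γ ^ 2 + 2 * γ * ((1 + α ^ 2) / (1 - α ^ 2)) * (K_R + 1)
          + (K_R + 1) ^ 2) : ℝ) : ℂ))) := by
  obtain ⟨hα0, hα1⟩ := hα
  have hα2 : 0 < 1 - α ^ 2 := by nlinarith
  set μ := (K_R + 1) / (1 - α ^ 2) with hμ
  have hμ0 : 0 < μ := by positivity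
  have hdisc : (μ * (1 + α ^ 2) + γ) ^ 2 - 4 * (μ * -α) ^ 2
      = γ ^ 2 + 2 * γ * ((1 + α ^ 2) / (1 - α ^ 2)) * (K_R + 1) + (K_R + 1) ^ 2 := by
    rw [hμ]; field_simp; ring
  have ha : 0 < μ * (1 + α ^ 2) + γ := by positivity
  have hb : 4 * (μ * -α) ^ 2 < (μ * (1 + α ^ 2) + γ) ^ 2 := by
    have : 0 < 2 * γ * ((1 + α ^ 2) / (1 - α ^ 2)) * (K_R + 1) := by positivity
    nlinarith
  have ha' : μ * (1 + α ^ 2) + γ < 2 * (μ * 1 + γ) := by nlinarith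
  rw [one_div, ← hdisc]
  refine ((Complex.continuous_ofReal.tendsto _).comp
    (tendsto_inv_mul_trace_tridiag_inv ha hb ha')).congr' ?_
  filter_upwards [eventually_ge_atTop 2, eventually_tridiagDet_ne_zero ha hb ha'] with N hN hθ
  have hμκ : μ * (1 / (K_R + 1)) * (1 - α ^ 2) = 1 := by rw [hμ]; field_simp
  rw [pilotCorrMatrix_eq_map]
  change _ = 1 / (N : ℂ) * trace (mmseError _ (Complex.ofRealHom γ⁻¹))
  rw [← map_mmseError, ← AddMonoidHom.map_trace, mmseError_smul_kmsMatrix hN hγ.ne' hμκ hθ]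
  simp
end

section
/- Let K_R ≥ 0, γ > 0 and α ∈ (0,1), and define Λ(Ω) = (1/(K_R+1))·(1−α²)/(1−2α·cos Ω + α²). Then (1/(2π))·∫_{−π}^{π} Λ(Ω)/(γ·Λ(Ω)+1) dΩ = 1/√(γ² + 2γ·((1+α²)/(1−α²))·(K_R+1) + (K_R+1)²). -/
/-!
The integrand simplifies to `A / (b - a cos Ω)` with `A = (1 - α²)/(K_R + 1)`, `a = 2α` and
`b = 1 + α² + γA`, so everything reduces to the classical integral
`∫_{-π}^{π} dx / (b - a cos x) = 2π / √(b² - a²)` for `|a| < b`; the discriminant `b² - a²`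
factors as `A²` times the expression under the square root.
-/

open Real intervalIntegral

section CosineIntegral

variable {a b : ℝ}

lemma sub_mul_cos_pos (hab : |a| < b) (x : ℝ) : 0 < b - a * cos x := by
  have : |a * cos x| ≤ |a| := by
    rw [abs_mul]; exact mul_le_of_le_one_right (abs_nonneg a) (abs_cos_le_one x)
  linarith [le_abs_self (a * cos x)]

/-- On `(-π, π)` this agrees with the Weierstrass-substitution primitive
`(2/s) arctan ((b + a) tan (x/2) / s)`, `s = √(b² - a²)`, but it is smooth on all of `ℝ`. -/
noncomputable def cosInvPrimitive (a b x : ℝ) : ℝ :=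
  (x + 2 * arctan (a * sin x / (b + √(b ^ 2 - a ^ 2) - a * cos x))) / √(b ^ 2 - a ^ 2)

lemma hasDerivAt_cosInvPrimitive (hab : |a| < b) (x : ℝ) :
    HasDerivAt (cosInvPrimitive a b) (b - a * cos x)⁻¹ x := by
  set s := √(b ^ 2 - a ^ 2)
  have hs2 : s ^ 2 = b ^ 2 - a ^ 2 := sq_sqrt (by nlinarith [abs_nonneg a, sq_abs a])
  have hs : 0 < s := sqrt_pos.2 (by nlinarith [abs_nonneg a, sq_abs a])
  have hP := sub_mul_cos_pos hab x
  have hD : 0 < b + s - a * cos x := by linarith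
  have hu : HasDerivAt (fun x => a * sin x / (b + s - a * cos x))
      ((a * cos x * (b + s - a * cos x) - a * sin x * (a * sin x)) / (b + s - a * cos x) ^ 2) x :=
    ((hasDerivAt_sin x).const_mul a).div
      (by simpa using ((hasDerivAt_cos x).const_mul a).const_sub (b + s)) hD.ne'
  refine (((hasDerivAt_id' x).add (hu.arctan.const_mul 2)).div_const s).congr_deriv ?_
  have hpyth := sin_sq_add_cos_sq x
  have hnorm : (b + s - a * cos x) ^ 2 + (a * sin x) ^ 2 = 2 * (b + s) * (b - a * cos x) := by
    linear_combination hs2 + a ^ 2 * hpyth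
  have hnum : a * cos x * (b + s - a * cos x) - a * sin x * (a * sin x)
      = (b + s) * (a * cos x - b + s) := by
    linear_combination -hs2 - a ^ 2 * hpyth
  have hbs : 0 < b + s := by linarith [abs_nonneg a]
  rw [hnum, div_pow, one_add_div (pow_pos hD 2).ne', hnorm]
  field_simp
  ring

theorem integral_inv_sub_mul_cos (hab : |a| < b) :
    ∫ x in -π..π, (b - a * cos x)⁻¹ = 2 * π / √(b ^ 2 - a ^ 2) := by
  have hint : IntervalIntegrable (fun x => (b - a * cos x)⁻¹) MeasureTheory.volume (-π) π :=
    ((continuous_const.sub (continuous_const.mul continuous_cos)).inv₀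
      fun x => (sub_mul_cos_pos hab x).ne').intervalIntegrable _ _
  rw [integral_eq_sub_of_hasDerivAt (fun x _ => hasDerivAt_cosInvPrimitive hab x) hint]
  simp only [cosInvPrimitive, sin_pi, sin_neg, neg_zero, mul_zero, zero_div, arctan_zero]
  ring

end CosineIntegral

/-- Theorem 1 (analytic core): for `K_R ≥ 0`, `γ > 0`, `α ∈ (0,1)`, with power spectrum
`Λ(Ω) = (1/(K_R+1))·(1-α²)/(1-2α cos Ω + α²)`, one has
`(1/(2π)) ∫_{-π}^{π} Λ(Ω)/(γΛ(Ω)+1) dΩ = 1/√(γ² + 2γ((1+α²)/(1-α²))(K_R+1) + (K_R+1)²)`. -/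
theorem asymptotic_mse_pilot_integral (K_R γ α : ℝ) (hK : 0 ≤ K_R) (hγ : 0 < γ)
    (hα : α ∈ Set.Ioo (0 : ℝ) 1) :
    (1 / (2 * Real.pi)) * ∫ Ω in (-Real.pi)..Real.pi,
        (fun Λ : ℝ => Λ / (γ * Λ + 1))
          ((1 / (K_R + 1)) * (1 - α ^ 2) / (1 - 2 * α * Real.cos Ω + α ^ 2))
      = 1 / Real.sqrt (γ ^ 2 + 2 * γ * ((1 + α ^ 2) / (1 - α ^ 2)) * (K_R + 1)
          + (K_R + 1) ^ 2) := by
  obtain ⟨hα0, hα1⟩ := hα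
  have h1α : 0 < 1 - α ^ 2 := by nlinarith
  set A := 1 / (K_R + 1) * (1 - α ^ 2)
  have hA : 0 < A := by positivity
  have hab : |2 * α| < 1 + α ^ 2 + γ * A := by
    rw [abs_of_pos (by positivity)]; nlinarith [mul_pos hγ hA]
  have hD : ∀ Ω, 0 < 1 - 2 * α * cos Ω + α ^ 2 := fun Ω => by
    linarith [sub_mul_cos_pos (a := 2 * α) (b := 1 + α ^ 2)
      (by rw [abs_of_pos (by positivity)]; nlinarith) Ω]
  have hintegrand : ∀ Ω, (fun Λ : ℝ => Λ / (γ * Λ + 1)) (A / (1 - 2 * α * cos Ω + α ^ 2))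
      = A * (1 + α ^ 2 + γ * A - 2 * α * cos Ω)⁻¹ := fun Ω => by
    have hD0 := (hD Ω).ne'
    field_simp
    ring
  have hdisc : (1 + α ^ 2 + γ * A) ^ 2 - (2 * α) ^ 2
      = A ^ 2 * (γ ^ 2 + 2 * γ * ((1 + α ^ 2) / (1 - α ^ 2)) * (K_R + 1) + (K_R + 1) ^ 2) := by
    simp only [A]
    field_simp
    ring
  rw [integral_congr fun Ω _ => hintegrand Ω, integral_const_mul,
    integral_inv_sub_mul_cos hab, hdisc, sqrt_mul (sq_nonneg A), sqrt_sq hA.le]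
  field_simp
end

section
/- Let α ∈ (0,1), t ∈ (0,1), β = α^t, and Ω ∈ ℝ. The doubly infinite series ∑_{k ∈ ℤ} α^{|k+t|}·e^{−ikΩ} converges absolutely and its sum equals (α(β⁻¹−β)·e^{iΩ} + β − α²β⁻¹)/(1−2α·cos Ω + α²). -/
/-!
Splitting `ℤ` into `k ≥ 0` and `k ≤ -1` turns the series into two geometric series, with
ratios `α e^{-iΩ}` and `α e^{iΩ}` (both of modulus `α < 1`) and leading terms `β` and
`α β⁻¹ e^{iΩ}`. Over the common denominator
`(1 - α e^{iΩ}) (1 - α e^{-iΩ}) = 1 - 2α cos Ω + α²` their sum is the stated fraction.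
-/

open Complex

section TwoSidedGeometric

variable {K : Type*} [NormedDivisionRing K] {f : ℤ → K} {a b q r : K}

theorem hasSum_int_of_two_sided_geometric (hq : ‖q‖ < 1) (hr : ‖r‖ < 1)
    (hnat : ∀ n : ℕ, f n = a * q ^ n) (hneg : ∀ n : ℕ, f (-(n + 1)) = b * r ^ n) :
    HasSum f (a * (1 - q)⁻¹ + b * (1 - r)⁻¹) :=
  .of_nat_of_neg_add_one (((hasSum_geometric_of_norm_lt_one hq).mul_left a).congr_fun hnat)
    (((hasSum_geometric_of_norm_lt_one hr).mul_left b).congr_fun hneg)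

theorem summable_norm_int_of_two_sided_geometric (hq : ‖q‖ < 1) (hr : ‖r‖ < 1)
    (hnat : ∀ n : ℕ, f n = a * q ^ n) (hneg : ∀ n : ℕ, f (-(n + 1)) = b * r ^ n) :
    Summable fun k => ‖f k‖ :=
  .of_nat_of_neg_add_one
    (((summable_geometric_of_lt_one (norm_nonneg q) hq).mul_left ‖a‖).congr fun n => by
      rw [hnat, norm_mul, norm_pow])
    (((summable_geometric_of_lt_one (norm_nonneg r) hr).mul_left ‖b‖).congr fun n => by
      rw [hneg, norm_mul, norm_pow])

end TwoSidedGeometric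

theorem add_mul_inv_one_sub_eq_div_of_mul_eq_one {K : Type*} [Field K] {a β z w : K}
    (hβ : β ≠ 0) (hzw : z * w = 1) (hz : 1 - a * z ≠ 0) (hw : 1 - a * w ≠ 0) :
    β * (1 - a * w)⁻¹ + a * β⁻¹ * z * (1 - a * z)⁻¹ =
      (a * (β⁻¹ - β) * z + β - a ^ 2 * β⁻¹) / ((1 - a * z) * (1 - a * w)) := by
  field_simp
  linear_combination (-a ^ 2) * hzw

theorem Complex.one_sub_mul_exp_mul_one_sub_mul_exp_neg (a x : ℂ) :
    (1 - a * exp (x * I)) * (1 - a * exp (-x * I)) = 1 - 2 * a * cos x + a ^ 2 := by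
  have hprod : exp (x * I) * exp (-x * I) = 1 := by rw [← exp_add]; simp
  linear_combination a ^ 2 * hprod + a * two_cos x

theorem Real.rpow_abs_natCast_add {α t : ℝ} (hα : 0 < α) (ht : 0 ≤ t) (n : ℕ) :
    α ^ |(n : ℝ) + t| = α ^ t * α ^ n := by
  rw [abs_of_nonneg (by positivity), Real.rpow_add hα, Real.rpow_natCast, mul_comm]

theorem Real.rpow_abs_neg_natCast_add_one_add {α t : ℝ} (hα : 0 < α) (ht : t ≤ 1) (n : ℕ) :
    α ^ |-((n : ℝ) + 1) + t| = α ^ (1 - t) * α ^ n := by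
  rw [abs_of_nonpos (by linarith [n.cast_nonneg (α := ℝ)]),
    show -(-((n : ℝ) + 1) + t) = 1 - t + n by ring, Real.rpow_add hα, Real.rpow_natCast]

theorem Complex.norm_ofReal_mul_exp_mul_I_lt_one {α : ℝ} (hα : |α| < 1) (x : ℝ) :
    ‖(α : ℂ) * exp (x * I)‖ < 1 := by
  rwa [norm_mul, norm_exp_ofReal_mul_I, norm_real, Real.norm_eq_abs, mul_one]

/-- The discrete-time Fourier transform of the shifted exponential correlation sequence:
for `α ∈ (0,1)`, `t ∈ (0,1)`, `β = α^t` and `Ω ∈ ℝ`, the doubly infinite series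
`∑_{k ∈ ℤ} α^{|k+t|} e^{-ikΩ}` converges absolutely and sums to
`(α(β⁻¹-β) e^{iΩ} + β - α²β⁻¹)/(1-2α cos Ω + α²)`. -/
theorem dtft_shifted_exponential_sequence (α t Ω : ℝ) (hα : α ∈ Set.Ioo (0 : ℝ) 1)
    (ht : t ∈ Set.Ioo (0 : ℝ) 1) :
    Summable (fun k : ℤ =>
        ‖((α ^ |(k : ℝ) + t| : ℝ) : ℂ) * Complex.exp (-Complex.I * (k : ℂ) * (Ω : ℂ))‖) ∧
    ∑' k : ℤ, ((α ^ |(k : ℝ) + t| : ℝ) : ℂ) * Complex.exp (-Complex.I * (k : ℂ) * (Ω : ℂ))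
      = (((α * ((α ^ t)⁻¹ - α ^ t) : ℝ) : ℂ) * Complex.exp (Complex.I * (Ω : ℂ))
            + ((α ^ t : ℝ) : ℂ) - ((α ^ 2 * (α ^ t)⁻¹ : ℝ) : ℂ))
          / (((1 - 2 * α * Real.cos Ω + α ^ 2 : ℝ)) : ℂ) := by
  set f : ℤ → ℂ := fun k => ((α ^ |(k : ℝ) + t| : ℝ) : ℂ) * exp (-I * k * Ω) with hf
  set z := exp (Ω * I) with hz
  set w := exp (-Ω * I) with hw
  have hzw : z * w = 1 := by rw [← exp_add]; simp
  have hα_abs : |α| < 1 := by rw [abs_of_pos hα.1]; exact hα.2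
  have hαz : ‖(α : ℂ) * z‖ < 1 := norm_ofReal_mul_exp_mul_I_lt_one hα_abs Ω
  have hαw : ‖(α : ℂ) * w‖ < 1 := by
    simpa only [ofReal_neg] using norm_ofReal_mul_exp_mul_I_lt_one hα_abs (-Ω)
  have hnat (n : ℕ) : f n = ((α ^ t : ℝ) : ℂ) * (α * w) ^ n := by
    simp only [hf, Int.cast_natCast]
    rw [Real.rpow_abs_natCast_add hα.1 ht.1.le, mul_pow, ← exp_nat_mul]
    push_cast
    ring_nf
  have hneg (n : ℕ) : f (-(n + 1)) = α * ((α ^ t : ℝ) : ℂ)⁻¹ * z * (α * z) ^ n := by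
    rw [hf]
    push_cast
    rw [Real.rpow_abs_neg_natCast_add_one_add hα.1 ht.2.le, Real.rpow_sub hα.1, Real.rpow_one,
      mul_pow, ← exp_nat_mul, show -I * -(n + 1) * Ω = Ω * I + n * (Ω * I) by ring, exp_add]
    push_cast
    ring
  have hsum := hasSum_int_of_two_sided_geometric hαw hαz hnat hneg
  refine ⟨summable_norm_int_of_two_sided_geometric hαw hαz hnat hneg, ?_⟩
  have hβ : ((α ^ t : ℝ) : ℂ) ≠ 0 := ofReal_ne_zero.2 (Real.rpow_pos_of_pos hα.1 t).ne'
  rw [hsum.tsum_eq, add_mul_inv_one_sub_eq_div_of_mul_eq_one hβ hzw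
    (isUnit_one_sub_of_norm_lt_one hαz).ne_zero (isUnit_one_sub_of_norm_lt_one hαw).ne_zero,
    hz, hw, one_sub_mul_exp_mul_one_sub_mul_exp_neg]
  push_cast
  rw [mul_comm I]
end
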